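/- Let E be a complex inner product space, let D : E → E be a symmetric complex-linear map (⟨Dψ, φ⟩ = ⟨ψ, Dφ⟩ for all ψ, φ), and let χ : E → E be a symmetric complex-linear involution (χ ∘ χ = id) satisfying D ∘ χ = -χ ∘ D. Set P^± := ½(id ± χ). Suppose λ ≥ 0 is a real number, Ψ ∈ E satisfies D Ψ = λ • Ψ, and φ ∈ E satisfies P^+ φ = P^+ Ψ. Then Re⟨Dφ, φ⟩ ≤ λ ‖φ‖². -/

import Mathlib

/-!
Let `P = ½(1 + χ)` and `Q = ½(1 - χ)` be the orthogonal projections onto the `±1`-eigenspaces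
of `χ`. Anticommutation gives `D P = Q D`, so `D` exchanges the two eigenspaces and
`Re⟪Dφ, φ⟫ = 2 Re⟪D Pφ, Qφ⟫`. Since `Pφ = PΨ` and `D PΨ = λ QΨ`, this equals
`2λ Re⟪QΨ, Qφ⟫ ≤ λ (‖QΨ‖² + ‖Qφ‖²)`. Symmetry of `D` tested on `PΨ` and `QΨ` gives
`λ ‖QΨ‖² = λ ‖PΨ‖² = λ ‖Pφ‖²`, and Pythagoras turns `λ (‖Pφ‖² + ‖Qφ‖²)` into `λ ‖φ‖²`.
-/

open LinearMap RCLike ComplexConjugate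
open scoped InnerProductSpace

section Module

variable {R M : Type*} [CommRing R] [AddCommGroup M] [Module R M] {D P Q χ : M →ₗ[R] M}

theorem LinearMap.apply_add_apply_of_add_eq_id (hPQ : P + Q = id) (x : M) : P x + Q x = x := by
  simpa using LinearMap.congr_fun hPQ x

theorem LinearMap.comp_eq_comp_swap_of_add_eq_id (hPQ : P + Q = id) (hDP : D ∘ₗ P = Q ∘ₗ D) :
    D ∘ₗ Q = P ∘ₗ D := by
  have hQ : Q = id - P := eq_sub_of_add_eq' hPQ
  have hP : P = id - Q := eq_sub_of_add_eq hPQ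
  rw [hQ, comp_sub, hDP, comp_id, hP, sub_comp, id_comp]

theorem LinearMap.apply_apply_eq_smul_of_comp_eq (hDP : D ∘ₗ P = Q ∘ₗ D) {c : R} {Ψ : M}
    (hΨ : D Ψ = c • Ψ) : D (P Ψ) = c • Q Ψ := by
  rw [← comp_apply, hDP, comp_apply, hΨ, map_smul]

theorem LinearMap.comp_smul_id_add_of_anticomm (hanti : D ∘ₗ χ = -(χ ∘ₗ D)) (c : R) :
    D ∘ₗ (c • (id + χ)) = (c • (id - χ)) ∘ₗ D := by
  rw [comp_smul, smul_comp, comp_add, sub_comp, hanti, comp_id, id_comp, sub_eq_add_neg]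

end Module

theorem LinearMap.half_smul_id_add_add_half_smul_id_sub {K M : Type*} [Field K] [CharZero K]
    [AddCommGroup M] [Module K M] (χ : M →ₗ[K] M) :
    (1 / 2 : K) • (id + χ) + (1 / 2 : K) • (id - χ) = id := by
  rw [← smul_add, add_add_sub_cancel, ← two_smul K, smul_smul]
  norm_num

section InnerProduct

variable {𝕜 E : Type*} [RCLike 𝕜] [NormedAddCommGroup E] [InnerProductSpace 𝕜 E]
  {D P Q χ : E →ₗ[𝕜] E}

theorem LinearMap.IsSymmetric.inner_smul_id_add_apply_smul_id_sub_apply (hχ : χ.IsSymmetric)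
    (hχ2 : χ ∘ₗ χ = id) (c d : 𝕜) (x y : E) :
    ⟪(c • (id + χ) : E →ₗ[𝕜] E) x, (d • (id - χ) : E →ₗ[𝕜] E) y⟫_𝕜 = 0 := by
  have hχχ : χ (χ y) = y := LinearMap.congr_fun hχ2 y
  simp only [smul_apply, add_apply, sub_apply, id_apply, inner_smul_left, inner_smul_right,
    inner_add_left, inner_sub_right, hχ x, hχχ]
  ring

theorem LinearMap.norm_sq_eq_add_of_add_eq_id (hPQ : P + Q = id)
    (horth : ∀ x y, ⟪P x, Q y⟫_𝕜 = 0) (φ : E) : ‖φ‖ ^ 2 = ‖P φ‖ ^ 2 + ‖Q φ‖ ^ 2 := by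
  conv_lhs => rw [← apply_add_apply_of_add_eq_id hPQ φ]
  rw [@norm_add_sq 𝕜, horth, map_zero, mul_zero, add_zero]

theorem LinearMap.IsSymmetric.re_inner_apply_self_eq (hD : D.IsSymmetric) (hPQ : P + Q = id)
    (horth : ∀ x y, ⟪P x, Q y⟫_𝕜 = 0) (hDP : D ∘ₗ P = Q ∘ₗ D) (φ : E) :
    re ⟪D φ, φ⟫_𝕜 = 2 * re ⟪D (P φ), Q φ⟫_𝕜 := by
  have hDQ := comp_eq_comp_swap_of_add_eq_id hPQ hDP
  have hPP : ⟪D (P φ), P φ⟫_𝕜 = 0 := by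
    rw [← comp_apply, hDP, comp_apply, inner_eq_zero_symm, horth]
  have hQQ : ⟪D (Q φ), Q φ⟫_𝕜 = 0 := by
    rw [← comp_apply, hDQ, comp_apply, horth]
  have hQP : ⟪D (Q φ), P φ⟫_𝕜 = conj ⟪D (P φ), Q φ⟫_𝕜 := by
    rw [hD, inner_conj_symm]
  conv_lhs => rw [← apply_add_apply_of_add_eq_id hPQ φ]
  simp only [map_add, inner_add_left, inner_add_right, hPP, hQQ, hQP, conj_re, map_zero]
  ring

theorem LinearMap.IsSymmetric.mul_norm_sq_eq_of_apply_eq_smul (hD : D.IsSymmetric)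
    (hPQ : P + Q = id) (hDP : D ∘ₗ P = Q ∘ₗ D) {lam : ℝ} {Ψ : E} (hΨ : D Ψ = (lam : 𝕜) • Ψ) :
    lam * ‖Q Ψ‖ ^ 2 = lam * ‖P Ψ‖ ^ 2 := by
  have hDQ := comp_eq_comp_swap_of_add_eq_id hPQ hDP
  have h := hD (P Ψ) (Q Ψ)
  rw [apply_apply_eq_smul_of_comp_eq hDP hΨ, apply_apply_eq_smul_of_comp_eq hDQ hΨ,
    inner_smul_left, inner_smul_right, conj_ofReal, inner_self_eq_norm_sq_to_K,
    inner_self_eq_norm_sq_to_K] at h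
  exact_mod_cast h

theorem LinearMap.IsSymmetric.re_inner_apply_self_le (hD : D.IsSymmetric) (hPQ : P + Q = id)
    (horth : ∀ x y, ⟪P x, Q y⟫_𝕜 = 0) (hDP : D ∘ₗ P = Q ∘ₗ D) {lam : ℝ} (hlam : 0 ≤ lam)
    {Ψ φ : E} (hΨ : D Ψ = (lam : 𝕜) • Ψ) (hφ : P φ = P Ψ) :
    re ⟪D φ, φ⟫_𝕜 ≤ lam * ‖φ‖ ^ 2 := by
  have hcross : 2 * re ⟪Q Ψ, Q φ⟫_𝕜 ≤ ‖Q Ψ‖ ^ 2 + ‖Q φ‖ ^ 2 := by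
    linarith [re_inner_le_norm (𝕜 := 𝕜) (Q Ψ) (Q φ), two_mul_le_add_sq ‖Q Ψ‖ ‖Q φ‖]
  calc re ⟪D φ, φ⟫_𝕜 = lam * (2 * re ⟪Q Ψ, Q φ⟫_𝕜) := by
        rw [hD.re_inner_apply_self_eq hPQ horth hDP, hφ, apply_apply_eq_smul_of_comp_eq hDP hΨ,
          inner_smul_left, conj_ofReal, re_ofReal_mul]
        ring
    _ ≤ lam * (‖Q Ψ‖ ^ 2 + ‖Q φ‖ ^ 2) := mul_le_mul_of_nonneg_left hcross hlam
    _ = lam * ‖φ‖ ^ 2 := by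
        rw [mul_add, hD.mul_norm_sq_eq_of_apply_eq_smul hPQ hDP hΨ, ← hφ, ← mul_add,
          norm_sq_eq_add_of_add_eq_id hPQ horth φ]

end InnerProduct

theorem re_inner_D_le_of_eigen_boundary_general
    {E : Type*} [NormedAddCommGroup E] [InnerProductSpace ℂ E]
    (D χ : E →ₗ[ℂ] E)
    (hDsym : ∀ ψ φ : E, (inner ℂ (D ψ) φ : ℂ) = inner ℂ ψ (D φ))
    (hχsym : ∀ ψ φ : E, (inner ℂ (χ ψ) φ : ℂ) = inner ℂ ψ (χ φ))
    (hχ2 : χ ∘ₗ χ = (LinearMap.id : E →ₗ[ℂ] E))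
    (hanti : D ∘ₗ χ = - (χ ∘ₗ D))
    (Pp : E →ₗ[ℂ] E)
    (hPp : Pp = (1/2 : ℂ) • ((LinearMap.id : E →ₗ[ℂ] E) + χ))
    (lam : ℝ) (hlam : 0 ≤ lam) (Ψ φ : E)
    (hΨ : D Ψ = (lam : ℂ) • Ψ)
    (hφ : Pp φ = Pp Ψ) :
    (inner ℂ (D φ) φ : ℂ).re ≤ lam * ‖φ‖^2 := by
  subst hPp
  exact LinearMap.IsSymmetric.re_inner_apply_self_le hDsym
    (half_smul_id_add_add_half_smul_id_sub χ)
    (LinearMap.IsSymmetric.inner_smul_id_add_apply_smul_id_sub_apply hχsym hχ2 _ _)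
    (comp_smul_id_add_of_anticomm hanti _) hlam hΨ hφ

/-- If `D` is symmetric and anticommutes with a symmetric involution `χ`,
`Ψ` is an eigenvector of `D` for the real eigenvalue `λ ≥ 0`, and `φ` agrees
with `Ψ` under `P⁺ := ½(id + χ)`, then `Re⟨Dφ, φ⟩ ≤ λ ‖φ‖²`. -/
theorem re_inner_D_le_of_eigen_boundary
    {E : Type*} [NormedAddCommGroup E] [InnerProductSpace ℂ E]
    (D χ : E →ₗ[ℂ] E)
    (hDsym : ∀ ψ φ : E, (inner ℂ (D ψ) φ : ℂ) = inner ℂ ψ (D φ))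
    (hχsym : ∀ ψ φ : E, (inner ℂ (χ ψ) φ : ℂ) = inner ℂ ψ (χ φ))
    (hχ2 : χ ∘ₗ χ = (LinearMap.id : E →ₗ[ℂ] E))
    (hanti : D ∘ₗ χ = - (χ ∘ₗ D))
    (Pp Pm : E →ₗ[ℂ] E)
    (hPp : Pp = (1/2 : ℂ) • ((LinearMap.id : E →ₗ[ℂ] E) + χ))
    (hPm : Pm = (1/2 : ℂ) • ((LinearMap.id : E →ₗ[ℂ] E) - χ))
    (lam : ℝ) (hlam : 0 ≤ lam) (Ψ φ : E)
    (hΨ : D Ψ = (lam : ℂ) • Ψ)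
    (hφ : Pp φ = Pp Ψ) :
    (inner ℂ (D φ) φ : ℂ).re ≤ lam * ‖φ‖^2 :=
  re_inner_D_le_of_eigen_boundary_general D χ hDsym hχsym hχ2 hanti Pp hPp lam hlam Ψ φ hΨ hφ
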